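/- arXiv:1412.8066 — 3 statements merged into one kernel-verified Lean document; each statement's English description precedes it below -/
import Mathlib

section
/- Let G be a finite group acting by ring automorphisms on a commutative ring A, and let A^G denote the subring of G-invariant elements. If f₁ and f₂ are ring homomorphisms from A to a field L whose restrictions to A^G coincide, then there exists g ∈ G such that f₂ = f₁ ∘ g (where g is viewed as the ring automorphism of A given by the action). -/
/-!
The kernels of `f₁` and `f₂` are primes of `A` over the same prime of `A^G`, and `G` acts
transitively on such primes, so after twisting `f₁` by an element of `G` both maps have the same
kernel `Q` and induce embeddings of `A ⧸ Q` into `L`. Every `f₂ b` is a root of the `f₁`-image of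
`∏ g, (X - g • b)`, whose coefficients are invariant, so `f₂ b = f₁ (g • b)` for some `g`: the two
embeddings have the same image and differ by an automorphism of `A ⧸ Q` over `A^G ⧸ (Q ∩ A^G)`.
Every such automorphism is induced by an element of the decomposition group of `Q`.
-/

open Pointwise Polynomial

instance FixedPoints.isInvariant_subring (A G : Type*) [CommRing A] [Group G]
    [MulSemiringAction G A] : Algebra.IsInvariant (FixedPoints.subring A G) A G :=
  ⟨fun a ha => ⟨⟨a, ha⟩, rfl⟩⟩

theorem RingHom.range_comp_of_surjective {R S T : Type*} [Ring R] [Ring S] [Ring T]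
    (φ : S →+* T) {π : R →+* S} (hπ : Function.Surjective π) : (φ.comp π).range = φ.range := by
  rw [← RingHom.map_range, RingHom.range_eq_top_of_surjective _ hπ, ← RingHom.range_eq_map]

theorem RingHom.exists_ringEquiv_comp_eq_of_range_eq {R S : Type*} [Ring R] [Ring S]
    {φ₁ φ₂ : R →+* S} (h₁ : Function.Injective φ₁) (h₂ : Function.Injective φ₂)
    (h : φ₁.range = φ₂.range) : ∃ τ : R ≃+* R, ∀ x, φ₁ (τ x) = φ₂ x := by
  let e₁ := RingEquiv.ofBijective φ₁.rangeRestrict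
    ⟨fun x y hxy => h₁ (congrArg Subtype.val hxy), φ₁.rangeRestrict_surjective⟩
  let e₂ := RingEquiv.ofBijective φ₂.rangeRestrict
    ⟨fun x y hxy => h₂ (congrArg Subtype.val hxy), φ₂.rangeRestrict_surjective⟩
  exact ⟨(e₂.trans (RingEquiv.subringCongr h.symm)).trans e₁.symm,
    fun x => congrArg Subtype.val (e₁.apply_symm_apply _)⟩

namespace Algebra.IsInvariant

variable {R A L : Type*} [CommRing R] [CommRing A] [Algebra R A] [CommRing L] [IsDomain L]
  (G : Type*) [Group G] [Finite G] [MulSemiringAction G A] [IsInvariant R A G]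
  {f₁ f₂ : A →+* L}

theorem exists_smul_eq_of_comp_algebraMap_eq
    (hf : f₁.comp (algebraMap R A) = f₂.comp (algebraMap R A)) (b : A) :
    ∃ g : G, f₂ b = f₁ (g • b) := by
  cases nonempty_fintype G
  obtain ⟨p, hp⟩ := charpoly_mem_lifts R A G b
  have hmap : (MulSemiringAction.charpoly G b).map f₂ =
      (MulSemiringAction.charpoly G b).map f₁ := by
    rw [← hp, coe_mapRingHom, map_map, map_map, hf]
  have hroot := congrArg (eval (f₂ b)) hmap
  rw [eval_map_apply, MulSemiringAction.eval_charpoly, map_zero, MulSemiringAction.charpoly_eq,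
    Polynomial.map_prod, eval_prod, eq_comm, Finset.prod_eq_zero_iff] at hroot
  obtain ⟨g, -, hg⟩ := hroot
  exact ⟨g, by simpa [sub_eq_zero] using hg⟩

include G in
theorem range_eq_of_comp_algebraMap_eq
    (hf : f₁.comp (algebraMap R A) = f₂.comp (algebraMap R A)) : f₁.range = f₂.range := by
  have range_le : ∀ f f' : A →+* L, f.comp (algebraMap R A) = f'.comp (algebraMap R A) →
      f'.range ≤ f.range := by
    rintro f f' hff' _ ⟨b, rfl⟩
    obtain ⟨g, hg⟩ := exists_smul_eq_of_comp_algebraMap_eq G hff' b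
    exact ⟨g • b, hg.symm⟩
  exact le_antisymm (range_le f₂ f₁ hf.symm) (range_le f₁ f₂ hf)

variable [SMulCommClass G R A]

theorem exists_ker_eq_smul_ker (hf : f₁.comp (algebraMap R A) = f₂.comp (algebraMap R A)) :
    ∃ g : G, RingHom.ker f₁ = g • RingHom.ker f₂ :=
  have := RingHom.ker_isPrime f₁
  have := RingHom.ker_isPrime f₂
  exists_smul_of_under_eq R A G _ _ <| by simp only [Ideal.under, RingHom.comap_ker, hf]

theorem exists_comp_smul_eq_of_ker_eq
    (hf : f₁.comp (algebraMap R A) = f₂.comp (algebraMap R A))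
    (hker : RingHom.ker f₂ = RingHom.ker f₁) : ∃ g : G, ∀ a, f₂ a = f₁ (g • a) := by
  set Q := RingHom.ker f₁
  have : Q.IsPrime := RingHom.ker_isPrime f₁
  let φ₂ : A ⧸ Q →+* L := Ideal.Quotient.lift Q f₂ fun a ha => by rwa [← hker] at ha
  have hφ₂ : Function.Injective φ₂ := RingHom.lift_injective_of_ker_le_ideal Q _ hker.le
  have hrange : f₁.kerLift.range = φ₂.range := by
    rw [← f₁.kerLift.range_comp_of_surjective Ideal.Quotient.mk_surjective,
      ← φ₂.range_comp_of_surjective Ideal.Quotient.mk_surjective]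
    exact range_eq_of_comp_algebraMap_eq G hf
  obtain ⟨τ, hτ⟩ :=
    RingHom.exists_ringEquiv_comp_eq_of_range_eq (RingHom.kerLift_injective f₁) hφ₂ hrange
  let σ : (A ⧸ Q) ≃ₐ[R ⧸ Q.under R] (A ⧸ Q) := AlgEquiv.ofRingEquiv (f := τ) fun r => by
    obtain ⟨r, rfl⟩ := Ideal.Quotient.mk_surjective r
    apply RingHom.kerLift_injective f₁
    rw [hτ]
    exact (RingHom.congr_fun hf r).symm
  obtain ⟨⟨g, _⟩, hg⟩ := Ideal.Quotient.stabilizerHom_surjective G (Q.under R) Q σ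
  refine ⟨g, fun a => ?_⟩
  calc f₂ a = φ₂ (Ideal.Quotient.mk Q a) := rfl
    _ = f₁.kerLift (σ (Ideal.Quotient.mk Q a)) := (hτ _).symm
    _ = f₁ (g • a) := by rw [← hg]; rfl

theorem exists_comp_smul_eq (hf : f₁.comp (algebraMap R A) = f₂.comp (algebraMap R A)) :
    ∃ g : G, ∀ a, f₂ a = f₁ (g • a) := by
  obtain ⟨g, hg⟩ := exists_ker_eq_smul_ker G hf
  let f₁' := f₁.comp (MulSemiringAction.toRingHom G A g)
  have hf' : f₁'.comp (algebraMap R A) = f₂.comp (algebraMap R A) := by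
    ext r
    simpa [f₁', smul_algebraMap] using RingHom.congr_fun hf r
  have hker : RingHom.ker f₂ = RingHom.ker f₁' := by
    ext a
    rw [← RingHom.comap_ker, Ideal.mem_comap, hg]
    exact Ideal.smul_mem_pointwise_smul_iff.symm
  obtain ⟨h, hh⟩ := exists_comp_smul_eq_of_ker_eq G hf' hker
  exact ⟨g * h, fun a => by rw [hh, mul_smul]; rfl⟩

end Algebra.IsInvariant

theorem stmt0 (A : Type*) [CommRing A] (G : Type*) [Group G] [Finite G]
    [MulSemiringAction G A] (L : Type*) [Field L]
    (f₁ f₂ : A →+* L)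
    (h : ∀ a : A, (∀ g : G, g • a = a) → f₁ a = f₂ a) :
    ∃ g : G, ∀ a : A, f₂ a = f₁ (g • a) :=
  Algebra.IsInvariant.exists_comp_smul_eq (R := FixedPoints.subring A G) G <|
    RingHom.ext fun r => h r r.2
end

section
/- Let A be an integral domain on which a finite group G acts by ring automorphisms. If f₁, f₂ : A → A are ring homomorphisms that agree on the fixed subring A^G, then there exists g ∈ G such that f₂ = f₁ ∘ g. -/
open Polynomial

/-- Pointwise version: for each `a` there exists `g` (depending on `a`) with
`f₂ a = f₁ (g • a)`. Stated for ring homs into a possibly different domain `B`. -/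
lemma stmt1_pointwise {A : Type*} [CommRing A] [IsDomain A] {B : Type*} [CommRing B]
    [IsDomain B] {G : Type*} [Group G] [Fintype G] [MulSemiringAction G A]
    (f₁ f₂ : A →+* B)
    (h : ∀ a : A, (∀ g : G, g • a = a) → f₁ a = f₂ a) (a : A) :
    ∃ g : G, f₂ a = f₁ (g • a) := by
  classical
  set P : A[X] := ∏ g : G, (X - C (g • a)) with hPdef
  have hPsmul : ∀ g : G, g • P = P := by
    intro g
    calc g • ∏ h : G, (X - C (h • a)) = ∏ h : G, (X - C ((g * h) • a)) := by
          rw [Finset.smul_prod']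
          refine Finset.prod_congr rfl fun h _ => ?_
          rw [smul_sub, Polynomial.smul_X, Polynomial.smul_C, mul_smul]
      _ = ∏ h : G, (X - C (h • a)) :=
          Fintype.prod_equiv (Equiv.mulLeft g) _ _ (fun h => rfl)
  have hPeval : P.eval a = 0 := by
    rw [hPdef, eval_prod]
    refine Finset.prod_eq_zero (Finset.mem_univ (1 : G)) ?_
    rw [eval_sub, eval_X, eval_C, one_smul, sub_self]
  have hmap : P.map f₁ = P.map f₂ := by
    ext n
    rw [coeff_map, coeff_map]
    refine h _ (fun g => ?_)
    rw [← Polynomial.coeff_smul, hPsmul g]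
  have h0 : ∏ g : G, (f₂ a - f₁ (g • a)) = 0 := by
    have h1 : P.map f₁ = ∏ g : G, (X - C (f₁ (g • a))) := by
      rw [hPdef, Polynomial.map_prod]
      refine Finset.prod_congr rfl fun g _ => ?_
      rw [Polynomial.map_sub, Polynomial.map_X, Polynomial.map_C]
    have h2 : (P.map f₁).eval (f₂ a) = ∏ g : G, (f₂ a - f₁ (g • a)) := by
      rw [h1, eval_prod]
      refine Finset.prod_congr rfl fun g _ => ?_
      rw [eval_sub, eval_X, eval_C]
    rw [← h2, hmap, Polynomial.eval_map, Polynomial.eval₂_hom, hPeval, map_zero]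
  obtain ⟨g, _, hg⟩ := Finset.prod_eq_zero_iff.mp h0
  exact ⟨g, sub_eq_zero.mp hg⟩

theorem stmt1 (A : Type*) [CommRing A] [IsDomain A] (G : Type*) [Group G] [Finite G]
    [MulSemiringAction G A]
    (f₁ f₂ : A →+* A)
    (h : ∀ a : A, (∀ g : G, g • a = a) → f₁ a = f₂ a) :
    ∃ g : G, ∀ a : A, f₂ a = f₁ (g • a) := by
  classical
  have : Fintype G := Fintype.ofFinite G
  by_contra hc
  push_neg at hc
  choose b hb using hc
  -- work in the domain A[X] with the coefficientwise action of G
  set F₁ : A[X] →+* A[X] := Polynomial.mapRingHom f₁ with hF₁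
  set F₂ : A[X] →+* A[X] := Polynomial.mapRingHom f₂ with hF₂
  have hinv : ∀ p : A[X], (∀ g : G, g • p = p) → F₁ p = F₂ p := by
    intro p hp
    refine Polynomial.ext fun n => ?_
    rw [hF₁, hF₂, coe_mapRingHom, coe_mapRingHom, coeff_map, coeff_map]
    refine h _ (fun g => ?_)
    rw [← Polynomial.coeff_smul, hp g]
  set e : G → ℕ := fun g => ((Fintype.equivFin G) g : ℕ) with he
  have he_inj : Function.Injective e := fun x y hxy =>
    (Fintype.equivFin G).injective (Fin.val_injective hxy)
  set p : A[X] := ∑ g : G, C (b g) * X ^ (e g) with hpdef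
  have hcoeff : ∀ g0 : G, p.coeff (e g0) = b g0 := by
    intro g0
    rw [hpdef, Polynomial.finset_sum_coeff]
    rw [Finset.sum_eq_single g0]
    · rw [coeff_C_mul, coeff_X_pow, if_pos rfl, mul_one]
    · intro g _ hg
      rw [coeff_C_mul, coeff_X_pow, if_neg, mul_zero]
      exact fun hEq => hg (he_inj hEq.symm)
    · intro hg0; exact absurd (Finset.mem_univ g0) hg0
  obtain ⟨g, hg⟩ := stmt1_pointwise F₁ F₂ hinv p
  have hL : (F₂ p).coeff (e g) = f₂ (b g) := by
    rw [hF₂, coe_mapRingHom, coeff_map, hcoeff]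
  have hR : (F₁ (g • p)).coeff (e g) = f₁ (g • b g) := by
    rw [hF₁, coe_mapRingHom, coeff_map, Polynomial.coeff_smul, hcoeff]
  exact hb g (by rw [← hL, hg, hR])
end

section
/- Let K ⊆ F ⊆ M be a tower of fields of characteristic zero such that K is relatively algebraically closed in F and M/F is a finite Galois extension. Then the relative algebraic closure L of K in M (the set of elements of M algebraic over K) is a finite Galois extension of K. -/
set_option synthInstance.maxHeartbeats 1000000 in
set_option maxHeartbeats 2000000 in
theorem stmt2 (K F M : Type*) [Field K] [Field F] [Field M] [CharZero K]
    [Algebra K F] [Algebra F M] [Algebra K M] [IsScalarTower K F M]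
    (hrel : ∀ x : F, IsAlgebraic K x → x ∈ (algebraMap K F).range)
    [IsGalois F M] [FiniteDimensional F M] :
    ∃ L : IntermediateField K M,
      (∀ x : M, x ∈ L ↔ IsAlgebraic K x) ∧
      FiniteDimensional K L ∧ IsGalois K L := by
  classical
  set L : IntermediateField K M := algebraicClosure K M with hLdef
  -- the Galois group of M/F acts on L
  letI act : MulSemiringAction (M ≃ₐ[F] M) ↥L :=
  { smul := fun σ x => ⟨σ (x : M), (map_mem_algebraicClosure_iff
      ((σ.restrictScalars K : M ≃ₐ[K] M) : M →ₐ[K] M)).mpr x.2⟩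
    one_smul := fun x => Subtype.ext rfl
    mul_smul := fun σ τ x => Subtype.ext rfl
    smul_zero := fun σ => Subtype.ext (by
      show σ (((0:↥L)) : M) = ((0:↥L) : M)
      simp)
    smul_add := fun σ x y => Subtype.ext (by
      show σ ((x : M) + (y : M)) = σ (x : M) + σ (y : M)
      exact map_add σ _ _)
    smul_one := fun σ => Subtype.ext (by
      show σ (((1:↥L)) : M) = ((1:↥L) : M)
      simp)
    smul_mul := fun σ x y => Subtype.ext (by
      show σ ((x : M) * (y : M)) = σ (x : M) * σ (y : M)
      exact map_mul σ _ _) }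
  have smul_coe : ∀ (σ : M ≃ₐ[F] M) (x : ↥L), ((σ • x : ↥L) : M) = σ (x : M) :=
    fun _ _ => rfl
  haveI : SMulCommClass (M ≃ₐ[F] M) K ↥L := ⟨fun σ k x => Subtype.ext (by
    rw [smul_coe]
    show σ ((k • x : ↥L) : M) = ((k • (σ • x) : ↥L) : M)
    rw [Algebra.smul_def, Algebra.smul_def]
    push_cast
    rw [smul_coe]
    show σ (algebraMap K M k * (x : M)) = algebraMap K M k * σ (x : M)
    rw [map_mul]
    congr 1
    exact ((σ.restrictScalars K : M ≃ₐ[K] M)).commutes k)⟩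
  have key : ∀ x : ↥L, (∀ σ : M ≃ₐ[F] M, σ • x = x) → ∃ k : K, algebraMap K ↥L k = x := by
    intro x hx
    have hm : (x : M) ∈ IntermediateField.fixedField
        (IntermediateField.fixingSubgroup (⊥ : IntermediateField F M)) := by
      intro σ
      show σ.1 (x : M) = (x : M)
      exact congrArg Subtype.val (hx σ.1)
    rw [IsGalois.fixedField_fixingSubgroup (⊥ : IntermediateField F M)] at hm
    obtain ⟨y, hy⟩ := IntermediateField.mem_bot.mp hm
    have hyalg : IsAlgebraic K y := by
      have hxalg : IsAlgebraic K (x : M) := mem_algebraicClosure_iff.mp x.2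
      rw [← hy] at hxalg
      exact (isAlgebraic_algebraMap_iff (algebraMap F M).injective).mp hxalg
    obtain ⟨k, hk⟩ := hrel y hyalg
    refine ⟨k, Subtype.ext ?_⟩
    show algebraMap K M k = (x : M)
    rw [IsScalarTower.algebraMap_apply K F M, hk, hy]
  haveI hFD0 : FiniteDimensional (FixedPoints.subfield (M ≃ₐ[F] M) ↥L) ↥L := inferInstance
  haveI hFD : FiniteDimensional K ↥L := by
    obtain ⟨s, hs⟩ := Module.finite_def.mp hFD0
    refine ⟨⟨s, le_antisymm le_top ?_⟩⟩
    intro x hxt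
    clear hxt
    have hx : x ∈ Submodule.span (FixedPoints.subfield (M ≃ₐ[F] M) ↥L) (s : Set ↥L) :=
      hs ▸ Submodule.mem_top
    induction hx using Submodule.span_induction with
    | mem y hy => exact Submodule.subset_span hy
    | zero => exact zero_mem _
    | add a b _ _ ha hb => exact add_mem ha hb
    | smul c y _ hy =>
      obtain ⟨k, hk⟩ := key c.1 c.2
      have hcy : c • y = k • y := by
        rw [Algebra.smul_def k y, hk]
        rfl
      rw [hcy]
      exact Submodule.smul_mem _ k hy
  haveI hGal : IsGalois K ↥L := by
    apply IsGalois.of_fixedField_eq_bot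
    apply le_antisymm
    · intro x hx
      have hfix : ∀ σ : M ≃ₐ[F] M, σ • x = x := by
        intro σ
        exact hx ⟨MulSemiringAction.toAlgAut (M ≃ₐ[F] M) K ↥L σ, Subgroup.mem_top _⟩
      obtain ⟨k, hk⟩ := key x hfix
      exact IntermediateField.mem_bot.mpr ⟨k, hk⟩
    · intro x hx σ
      obtain ⟨k, rfl⟩ := IntermediateField.mem_bot.mp hx
      exact σ.1.commutes k
  exact ⟨L, fun x => mem_algebraicClosure_iff, hFD, hGal⟩
end
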